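/- Gerstenhaber's homotopy formula: in a planar operad with multiplication in abelian groups, for x ∈ V(m), y ∈ V(n): −d(x∘y) + (−1)^{n−1}(dx)∘y + x∘(dy) = (−1)^{n−1}(y·x − (−1)^{mn} x·y). -/

import Mathlib

/-- Transport an element of a graded family along an equality of indices. -/
def cst {V : ℕ → Type} {m n : ℕ} (h : m = n) (x : V m) : V n := h ▸ x

/-- Transport an element of a graded family of abelian groups along an
(alleged) equality of indices; it is the transport when the indices agree,
and `0` otherwise. -/
def tr {V : ℕ → Type} [∀ n, AddCommGroup (V n)] (m n : ℕ) (x : V m) : V n :=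
  if h : m = n then h ▸ x else 0

/-- The sign `(−1)^{(a−1)(b−1)}` (computed in `ℤ`, so that it is correct also
when `a = 0` or `b = 0`). -/
def jsgn (a b : ℕ) : ℤ := (-1) ^ ((((a : ℤ) - 1) * ((b : ℤ) - 1)).natAbs)

/-- A planar operad in the category of abelian groups: each `V(n)` is an
abelian group, the insertions `∘ᵢ : V(m) ⊗ V(n) → V(m+n-1)` are biadditive and
satisfy the standard pre-Lie system identities. -/
structure AddPlanarOperad (V : ℕ → Type) [∀ n, AddCommGroup (V n)] where
  one : V 1
  ins : ∀ {m n : ℕ}, V m → ℕ → V n → V (m + n - 1)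
  ins_add_left : ∀ {m n : ℕ} (x x' : V m) (j : ℕ) (y : V n),
    ins (x + x') j y = ins x j y + ins x' j y
  ins_add_right : ∀ {m n : ℕ} (x : V m) (j : ℕ) (y y' : V n),
    ins x j (y + y') = ins x j y + ins x j y'
  unit_left : ∀ {n : ℕ} (x : V n), ins one 0 x = cst (by omega) x
  unit_right : ∀ {n : ℕ} (x : V n) (j : ℕ) (hj : j < n), ins x j one = cst (by omega) x
  assoc_nested : ∀ {m n k : ℕ} (x : V m) (y : V n) (z : V k) (i j : ℕ)
    (hi : i < m) (hj : j < n),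
    ins (ins x i y) (i + j) z = cst (by omega) (ins x i (ins y j z))
  assoc_disjoint : ∀ {m n k : ℕ} (x : V m) (y : V n) (z : V k) (i j : ℕ)
    (hj : j < i) (hi : i < m),
    ins (ins x i y) j z = cst (by omega) (ins (ins x j z) (i + k - 1) y)

namespace AddPlanarOperad

variable {V : ℕ → Type} [∀ n, AddCommGroup (V n)] (P : AddPlanarOperad V)

/-- Gerstenhaber's circle product
`x ∘ y = Σ_{i=0}^{m-1} (−1)^{(n+1)i} x∘ᵢy` for `x ∈ V(m)`, `y ∈ V(n)`. -/
def circ {m n : ℕ} (x : V m) (y : V n) : V (m + n - 1) :=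
  ∑ i ∈ Finset.range m, ((-1 : ℤ) ^ ((n + 1) * i)) • P.ins x i y

/-- The bracket `[x, y] = x∘y − (−1)^{(m−1)(n−1)} y∘x`. -/
def gbr {m n : ℕ} (x : V m) (y : V n) : V (m + n - 1) :=
  P.circ x y - jsgn m n • cst (by omega) (P.circ y x)

end AddPlanarOperad

/-- An operad with multiplication in abelian groups. -/
structure AddOperadWithMult (V : ℕ → Type) [∀ n, AddCommGroup (V n)]
    extends AddPlanarOperad V where
  e : V 0
  mu : V 2
  mu_mu : ins mu 0 mu = ins mu 1 mu
  mu_e0 : ins mu 0 e = one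
  mu_e1 : ins mu 1 e = one

namespace AddOperadWithMult

variable {V : ℕ → Type} [∀ n, AddCommGroup (V n)] (P : AddOperadWithMult V)

/-- The cofaces `d⁰(x) = μ∘₁x`, `dⁱ(x) = x∘_{i-1}μ` for `1 ≤ i ≤ n`,
`d^{n+1}(x) = μ∘₀x` on `V(n)`. -/
def coface {n : ℕ} (i : ℕ) (x : V n) : V (n + 1) :=
  if i = 0 then cst (by omega) (P.ins P.mu 1 x)
  else if i = n + 1 then cst (by omega) (P.ins P.mu 0 x)
  else P.ins x (i - 1) P.mu

/-- The codegeneracies `sⁱ(x) = x∘ᵢe` on `V(n)`. -/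
def codeg {n : ℕ} (i : ℕ) (x : V n) : V (n - 1) := P.ins x i P.e

/-- The product `x·y := γ(μ; x, y)`. -/
def omul {m n : ℕ} (x : V m) (y : V n) : V (m + n) :=
  cst (by omega) (P.ins (cst (show 2 + n - 1 = n + 1 by omega) (P.ins P.mu 1 y)) 0 x)

/-- The distinguished elements `eₙ ∈ V(n)`, images of the associative operad. -/
def unitEl : ∀ n : ℕ, V n
  | 0 => P.e
  | 1 => P.one
  | n + 2 => cst (by omega) (P.ins P.mu 1 (unitEl (n + 1)))

/-- The differential `d = Σ_{i=0}^{n+1} (−1)ⁱ dⁱ`. -/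
def D {n : ℕ} (x : V n) : V (n + 1) :=
  ∑ i ∈ Finset.range (n + 2), ((-1 : ℤ) ^ i) • P.coface i x

/-- The degeneracy operator `s = Σ_{i=0}^{n-1} (−1)ⁱ sⁱ`. -/
def S {n : ℕ} (x : V n) : V (n - 1) :=
  ∑ i ∈ Finset.range n, ((-1 : ℤ) ^ i) • P.codeg i x

end AddOperadWithMult

section GHToolkit

variable {V : ℕ → Type} [∀ k, AddCommGroup (V k)]

theorem cst_add {a b : ℕ} (h : a = b) (u v : V a) :
    cst h (u + v) = cst h u + cst h v := by subst h; rfl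

theorem cst_zero {a b : ℕ} (h : a = b) : cst h (0 : V a) = 0 := by subst h; rfl

theorem cst_smul {a b : ℕ} (h : a = b) (c : ℤ) (u : V a) :
    cst h (c • u) = c • cst h u := by subst h; rfl

theorem cst_cst {a b c : ℕ} (h1 : a = b) (h2 : b = c) (u : V a) :
    cst h2 (cst h1 u) = cst (h1.trans h2) u := by subst h1; subst h2; rfl

theorem cst_sum {a b : ℕ} (h : a = b) {ι : Type} (s : Finset ι) (f : ι → V a) :
    cst h (∑ i ∈ s, f i) = ∑ i ∈ s, cst h (f i) := by subst h; rfl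

theorem cst_self {a : ℕ} (h : a = a) (u : V a) : cst h u = u := rfl

theorem tr_eq_cst {a b : ℕ} (h : a = b) (u : V a) : tr a b u = cst h u := by
  subst h; simp [tr, cst]

theorem tr_ne {a b : ℕ} (h : ¬ a = b) (u : V a) : tr a b u = 0 := dif_neg h

end GHToolkit

/-- The sign `(-1)^k`. -/
def sg (k : ℕ) : ℤ := (-1) ^ k

theorem sg_def (k : ℕ) : ((-1 : ℤ)) ^ k = sg k := rfl

theorem sg_eq_sg {a b : ℕ} (h : a % 2 = b % 2) : sg a = sg b := by
  unfold sg
  rcases Nat.even_or_odd a with ha | ha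
  · have hb : Even b := by rw [Nat.even_iff] at ha ⊢; omega
    rw [ha.neg_one_pow, hb.neg_one_pow]
  · have hb : Odd b := by
      rw [Nat.odd_iff]; rw [Nat.odd_iff] at ha; omega
    rw [ha.neg_one_pow, hb.neg_one_pow]

theorem sg_add_sg {a b : ℕ} (h : ¬ a % 2 = b % 2) : sg a + sg b = 0 := by
  unfold sg
  rcases Nat.even_or_odd a with ha | ha
  · have hb : Odd b := by
      rw [Nat.even_iff] at ha; rw [Nat.odd_iff]; omega
    rw [ha.neg_one_pow, hb.neg_one_pow]; ring
  · have hb : Even b := by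
      rw [Nat.odd_iff] at ha; rw [Nat.even_iff]; omega
    rw [ha.neg_one_pow, hb.neg_one_pow]; ring

theorem sg_mul_sg (a b : ℕ) : sg a * sg b = sg (a + b) := (pow_add (-1 : ℤ) a b).symm

namespace AddOperadWithMult

variable {V : ℕ → Type} [∀ k, AddCommGroup (V k)] (P : AddOperadWithMult V)

/-- Insertion on the left as an additive homomorphism. -/
def insL {a c : ℕ} (j : ℕ) (w : V c) : V a →+ V (a + c - 1) :=
  AddMonoidHom.mk' (fun u => P.ins u j w) (fun u v => P.ins_add_left u v j w)

/-- Insertion on the right as an additive homomorphism. -/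
def insR {a c : ℕ} (u : V a) (j : ℕ) : V c →+ V (a + c - 1) :=
  AddMonoidHom.mk' (fun w => P.ins u j w) (fun w w' => P.ins_add_right u j w w')

theorem ins_zsmul_left {a c : ℕ} (z : ℤ) (u : V a) (j : ℕ) (w : V c) :
    P.ins (z • u) j w = z • P.ins u j w := map_zsmul (P.insL j w) z u

theorem ins_zsmul_right {a c : ℕ} (u : V a) (j : ℕ) (z : ℤ) (w : V c) :
    P.ins u j (z • w) = z • P.ins u j w := map_zsmul (P.insR u j) z w

theorem ins_sum_left {a c : ℕ} {ι : Type} (s : Finset ι) (f : ι → V a) (j : ℕ) (w : V c) :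
    P.ins (∑ i ∈ s, f i) j w = ∑ i ∈ s, P.ins (f i) j w := map_sum (P.insL j w) f s

theorem ins_sum_right {a c : ℕ} {ι : Type} (u : V a) (j : ℕ) (s : Finset ι) (f : ι → V c) :
    P.ins u j (∑ i ∈ s, f i) = ∑ i ∈ s, P.ins u j (f i) := map_sum (P.insR u j) f s

theorem ins_cst_left {a a' c : ℕ} (h : a = a') (h2 : a + c - 1 = a' + c - 1)
    (u : V a) (j : ℕ) (w : V c) :
    P.ins (cst h u) j w = cst h2 (P.ins u j w) := by subst h; rfl

theorem ins_cst_right {a c c' : ℕ} (h : c = c') (h2 : a + c - 1 = a + c' - 1)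
    (u : V a) (j : ℕ) (w : V c) :
    P.ins u j (cst h w) = cst h2 (P.ins u j w) := by subst h; rfl

theorem coface_zero {k : ℕ} (z : V k) :
    P.coface 0 z = cst (by omega) (P.ins P.mu 1 z) := by simp [coface]

theorem coface_top {k : ℕ} (j : ℕ) (hj : j = k + 1) (z : V k) :
    P.coface j z = cst (by omega) (P.ins P.mu 0 z) := by
  subst hj; simp [coface]

theorem coface_mid {k : ℕ} (j : ℕ) (h1 : ¬ j = 0) (h2 : ¬ j = k + 1) (z : V k) :
    P.coface j z = P.ins z (j - 1) P.mu := by simp [coface, h1, h2]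

section Atoms

variable {m n : ℕ} (x : V m) (y : V n)

/-- Atom `(x ∘_b μ) ∘_a y`. -/
def PAt (a b : ℕ) : V (m + n) :=
  cst (show m + 1 + n - 1 = m + n by omega)
    (P.ins (cst (show m + 2 - 1 = m + 1 by omega) (P.ins x b P.mu)) a y)

/-- Atom `x ∘_i (y ∘_k μ)`. -/
def QAt (i k : ℕ) : V (m + n) :=
  cst (show m + (n + 1) - 1 = m + n by omega)
    (P.ins x i (cst (show n + 2 - 1 = n + 1 by omega) (P.ins y k P.mu)))

/-- Atom `(μ ∘₁ x) ∘_a y`. -/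
def R0At (a : ℕ) : V (m + n) :=
  cst (show m + 1 + n - 1 = m + n by omega)
    (P.ins (cst (show 2 + m - 1 = m + 1 by omega) (P.ins P.mu 1 x)) a y)

/-- Atom `(μ ∘₀ x) ∘_a y`. -/
def R1At (a : ℕ) : V (m + n) :=
  cst (show m + 1 + n - 1 = m + n by omega)
    (P.ins (cst (show 2 + m - 1 = m + 1 by omega) (P.ins P.mu 0 x)) a y)

theorem PAt_eq (a b : ℕ) :
    P.PAt x y a b
      = cst (show m + 2 - 1 + n - 1 = m + n by omega) (P.ins (P.ins x b P.mu) a y) := by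
  unfold PAt
  rw [P.ins_cst_left _ (show m + 2 - 1 + n - 1 = m + 1 + n - 1 by omega), cst_cst]

theorem QAt_eq (i k : ℕ) :
    P.QAt x y i k
      = cst (show m + (n + 2 - 1) - 1 = m + n by omega) (P.ins x i (P.ins y k P.mu)) := by
  unfold QAt
  rw [P.ins_cst_right _ (show m + (n + 2 - 1) - 1 = m + (n + 1) - 1 by omega), cst_cst]

/-- Grid sum of `PAt` atoms. -/
def GPs (c : ℕ → ℕ → ℤ) : V (m + n) :=
  ∑ a ∈ Finset.range (m + 1), ∑ b ∈ Finset.range m, c a b • P.PAt x y a b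

/-- Grid sum of `QAt` atoms. -/
def GQs (c : ℕ → ℕ → ℤ) : V (m + n) :=
  ∑ i ∈ Finset.range m, ∑ k ∈ Finset.range n, c i k • P.QAt x y i k

/-- Grid sum of `R0At` atoms. -/
def G0s (c : ℕ → ℤ) : V (m + n) :=
  ∑ a ∈ Finset.range (m + 1), c a • P.R0At x y a

/-- Grid sum of `R1At` atoms. -/
def G1s (c : ℕ → ℤ) : V (m + n) :=
  ∑ a ∈ Finset.range (m + 1), c a • P.R1At x y a

theorem GPs_add (c c' : ℕ → ℕ → ℤ) :
    P.GPs x y c + P.GPs x y c' = P.GPs x y (fun a b => c a b + c' a b) := by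
  simp [GPs, add_smul, Finset.sum_add_distrib]

theorem GPs_smul (z : ℤ) (c : ℕ → ℕ → ℤ) :
    z • P.GPs x y c = P.GPs x y (fun a b => z * c a b) := by
  simp [GPs, Finset.smul_sum, smul_smul]

theorem GPs_neg (c : ℕ → ℕ → ℤ) :
    -P.GPs x y c = P.GPs x y (fun a b => -(c a b)) := by
  simp [GPs, Finset.sum_neg_distrib, neg_smul]

theorem GPs_zero (c : ℕ → ℕ → ℤ)
    (hc : ∀ a, a ≤ m → ∀ b, b < m → c a b = 0) : P.GPs x y c = 0 := by
  refine Finset.sum_eq_zero fun a ha => Finset.sum_eq_zero fun b hb => ?_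
  rw [hc a (by simpa using Nat.lt_succ_iff.mp (Finset.mem_range.mp ha)) b
    (Finset.mem_range.mp hb), zero_smul]

theorem GQs_add (c c' : ℕ → ℕ → ℤ) :
    P.GQs x y c + P.GQs x y c' = P.GQs x y (fun i k => c i k + c' i k) := by
  simp [GQs, add_smul, Finset.sum_add_distrib]

theorem GQs_neg (c : ℕ → ℕ → ℤ) :
    -P.GQs x y c = P.GQs x y (fun i k => -(c i k)) := by
  simp [GQs, neg_smul]

theorem GQs_zero (c : ℕ → ℕ → ℤ)
    (hc : ∀ i, i < m → ∀ k, k < n → c i k = 0) : P.GQs x y c = 0 := by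
  refine Finset.sum_eq_zero fun i hi => Finset.sum_eq_zero fun k hk => ?_
  rw [hc i (Finset.mem_range.mp hi) k (Finset.mem_range.mp hk), zero_smul]

theorem G0s_add (c c' : ℕ → ℤ) :
    P.G0s x y c + P.G0s x y c' = P.G0s x y (fun a => c a + c' a) := by
  simp [G0s, add_smul, Finset.sum_add_distrib]

theorem G0s_smul (z : ℤ) (c : ℕ → ℤ) :
    z • P.G0s x y c = P.G0s x y (fun a => z * c a) := by
  simp [G0s, Finset.smul_sum, smul_smul]

theorem G0s_neg (c : ℕ → ℤ) : -P.G0s x y c = P.G0s x y (fun a => -(c a)) := by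
  simp [G0s, neg_smul]

theorem G0s_zero (c : ℕ → ℤ) (hc : ∀ a, a ≤ m → c a = 0) : P.G0s x y c = 0 := by
  refine Finset.sum_eq_zero fun a ha => ?_
  rw [hc a (Nat.lt_succ_iff.mp (Finset.mem_range.mp ha)), zero_smul]

theorem G1s_add (c c' : ℕ → ℤ) :
    P.G1s x y c + P.G1s x y c' = P.G1s x y (fun a => c a + c' a) := by
  simp [G1s, add_smul, Finset.sum_add_distrib]

theorem G1s_smul (z : ℤ) (c : ℕ → ℤ) :
    z • P.G1s x y c = P.G1s x y (fun a => z * c a) := by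
  simp [G1s, Finset.smul_sum, smul_smul]

theorem G1s_neg (c : ℕ → ℤ) : -P.G1s x y c = P.G1s x y (fun a => -(c a)) := by
  simp [G1s, neg_smul]

theorem G1s_zero (c : ℕ → ℤ) (hc : ∀ a, a ≤ m → c a = 0) : P.G1s x y c = 0 := by
  refine Finset.sum_eq_zero fun a ha => ?_
  rw [hc a (Nat.lt_succ_iff.mp (Finset.mem_range.mp ha)), zero_smul]

theorem single_R0 (z : ℤ) :
    z • P.R0At x y 0 = P.G0s x y (fun a => if a = 0 then z else 0) := by
  unfold G0s
  rw [show (∑ a ∈ Finset.range (m + 1), (fun a => if a = 0 then z else 0) a • P.R0At x y a)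
      = ∑ a ∈ Finset.range (m + 1), (if a = 0 then z • P.R0At x y a else 0) from
      Finset.sum_congr rfl fun a _ => by split <;> simp_all,
    Finset.sum_ite_eq' (Finset.range (m + 1)) 0 (fun a => z • P.R0At x y a)]
  simp

theorem single_R1 (z : ℤ) :
    z • P.R1At x y m = P.G1s x y (fun a => if a = m then z else 0) := by
  unfold G1s
  rw [show (∑ a ∈ Finset.range (m + 1), (fun a => if a = m then z else 0) a • P.R1At x y a)
      = ∑ a ∈ Finset.range (m + 1), (if a = m then z • P.R1At x y a else 0) from
      Finset.sum_congr rfl fun a _ => by split <;> simp_all,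
    Finset.sum_ite_eq' (Finset.range (m + 1)) m (fun a => z • P.R1At x y a)]
  simp

end Atoms

end AddOperadWithMult


section SumHelpers

variable {M : Type} [AddCommMonoid M]

theorem sum_if_lt {N i : ℕ} (h : i ≤ N) (g : ℕ → M) :
    (∑ b ∈ Finset.range N, if b < i then g b else 0) = ∑ b ∈ Finset.range i, g b := by
  rw [← Finset.sum_filter]
  congr 1
  ext t
  simp only [Finset.mem_filter, Finset.mem_range]
  omega

theorem sum_if_gt {N i : ℕ} (g : ℕ → M) :
    (∑ b ∈ Finset.range N, if i < b then g b else 0) = ∑ b ∈ Finset.Ico (i + 1) N, g b := by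
  rw [← Finset.sum_filter]
  congr 1
  ext t
  simp only [Finset.mem_filter, Finset.mem_range, Finset.mem_Ico]
  omega

theorem ite_smul_zero (p : Prop) [Decidable p] (z : ℤ) {W : Type} [AddCommGroup W] (w : W) :
    (if p then z else 0) • w = (if p then z • w else 0) := by
  split <;> simp

end SumHelpers

namespace AddOperadWithMult

variable {V : ℕ → Type} [∀ k, AddCommGroup (V k)] (P : AddOperadWithMult V)
variable {m n : ℕ} (x : V m) (y : V n)

theorem diag0_sum (g : ℕ → ℤ) :
    P.GPs x y (fun a b => if a = b then g b else 0)
      = ∑ i ∈ Finset.range m, g i • P.PAt x y i i := by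
  unfold GPs
  rw [Finset.sum_comm]
  refine Finset.sum_congr rfl fun b hb => ?_
  rw [Finset.sum_congr rfl fun a _ =>
      ite_smul_zero (a = b) (g b) (P.PAt x y a b),
    Finset.sum_ite_eq' (Finset.range (m + 1)) b (fun a => g b • P.PAt x y a b),
    if_pos]
  simp only [Finset.mem_range] at hb ⊢
  omega

theorem diag1_sum (g : ℕ → ℤ) :
    P.GPs x y (fun a b => if a = b + 1 then g b else 0)
      = ∑ i ∈ Finset.range m, g i • P.PAt x y (i + 1) i := by
  unfold GPs
  rw [Finset.sum_comm]
  refine Finset.sum_congr rfl fun b hb => ?_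
  rw [Finset.sum_congr rfl fun a _ =>
      ite_smul_zero (a = b + 1) (g b) (P.PAt x y a b),
    Finset.sum_ite_eq' (Finset.range (m + 1)) (b + 1) (fun a => g b • P.PAt x y a b),
    if_pos]
  simp only [Finset.mem_range] at hb ⊢
  omega

theorem lower_sum (g : ℕ → ℕ → ℤ) :
    P.GPs x y (fun a b => if b + 1 < a then g (a - 1) b else 0)
      = ∑ i ∈ Finset.range m, ∑ b ∈ Finset.range i, g i b • P.PAt x y (i + 1) b := by
  unfold GPs
  rw [Finset.sum_range_succ']
  have h0 : (∑ b ∈ Finset.range m,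
      (fun a b => if b + 1 < a then g (a - 1) b else 0) 0 b • P.PAt x y 0 b) = 0 := by
    refine Finset.sum_eq_zero fun b _ => ?_
    simp
  rw [h0, add_zero]
  refine Finset.sum_congr rfl fun i hi => ?_
  simp only [Finset.mem_range] at hi
  calc (∑ b ∈ Finset.range m,
        (fun a b => if b + 1 < a then g (a - 1) b else 0) (i + 1) b • P.PAt x y (i + 1) b)
      = ∑ b ∈ Finset.range m, (if b < i then g i b • P.PAt x y (i + 1) b else 0) := by
        refine Finset.sum_congr rfl fun b _ => ?_
        simp only []
        rw [ite_smul_zero]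
        congr 1
        · simp only [eq_iff_iff]; omega
    _ = ∑ b ∈ Finset.range i, g i b • P.PAt x y (i + 1) b :=
        sum_if_lt (by omega) _

theorem upper_sum (g : ℕ → ℕ → ℤ) :
    P.GPs x y (fun a b => if a < b then g a (b - (a + 1)) else 0)
      = ∑ i ∈ Finset.range m, ∑ t ∈ Finset.range (m - (i + 1)),
          g i t • P.PAt x y i (i + 1 + t) := by
  unfold GPs
  rw [Finset.sum_range_succ]
  have h0 : (∑ b ∈ Finset.range m,
      (fun a b => if a < b then g a (b - (a + 1)) else 0) m b • P.PAt x y m b) = 0 := by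
    refine Finset.sum_eq_zero fun b hb => ?_
    simp only [Finset.mem_range] at hb
    simp only []
    rw [if_neg (by omega)]
    simp
  rw [h0, add_zero]
  refine Finset.sum_congr rfl fun i hi => ?_
  simp only [Finset.mem_range] at hi
  calc (∑ b ∈ Finset.range m,
        (fun a b => if a < b then g a (b - (a + 1)) else 0) i b • P.PAt x y i b)
      = ∑ b ∈ Finset.range m, (if i < b then g i (b - (i + 1)) • P.PAt x y i b else 0) := by
        refine Finset.sum_congr rfl fun b _ => ?_
        simp only []
        rw [ite_smul_zero]
    _ = ∑ b ∈ Finset.Ico (i + 1) m, g i (b - (i + 1)) • P.PAt x y i b := sum_if_gt _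
    _ = ∑ t ∈ Finset.range (m - (i + 1)),
          g i (i + 1 + t - (i + 1)) • P.PAt x y i (i + 1 + t) :=
        Finset.sum_Ico_eq_sum_range _ _ _
    _ = ∑ t ∈ Finset.range (m - (i + 1)), g i t • P.PAt x y i (i + 1 + t) := by
        refine Finset.sum_congr rfl fun t _ => ?_
        congr 2
        omega

theorem lemB :
    cst (show m + 1 + n - 1 = m + n by omega) (P.toAddPlanarOperad.circ (P.D x) y)
      = P.GPs x y (fun a b => sg ((n + 1) * a) * sg (b + 1))
        + P.G0s x y (fun a => sg ((n + 1) * a))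
        + P.G1s x y (fun a => sg ((n + 1) * a) * sg (m + 1)) := by
  have key : ∀ a : ℕ,
      cst (show m + 1 + n - 1 = m + n by omega) (P.ins (P.D x) a y)
        = (∑ b ∈ Finset.range m, sg (b + 1) • P.PAt x y a b)
          + P.R0At x y a + sg (m + 1) • P.R1At x y a := by
    intro a
    rw [show P.D x = ∑ j ∈ Finset.range (m + 2), ((-1 : ℤ) ^ j) • P.coface j x from rfl]
    rw [Finset.sum_range_succ, Finset.sum_range_succ']
    rw [P.ins_add_left, P.ins_add_left, cst_add, cst_add]
    congr 1
    congr 1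
    · rw [P.ins_sum_left, cst_sum]
      refine Finset.sum_congr rfl fun j hj => ?_
      simp only [Finset.mem_range] at hj
      rw [P.ins_zsmul_left, cst_smul,
        P.coface_mid (j + 1) (by omega) (by omega), PAt_eq]
      rfl
    · rw [P.coface_zero, P.ins_zsmul_left, cst_smul, pow_zero, one_smul]
      rfl
    · rw [P.coface_top (m + 1) rfl, P.ins_zsmul_left, cst_smul]
      rfl
  rw [show P.toAddPlanarOperad.circ (P.D x) y
      = ∑ a ∈ Finset.range (m + 1), ((-1 : ℤ) ^ ((n + 1) * a)) • P.ins (P.D x) a y from rfl]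
  rw [cst_sum, Finset.sum_congr rfl fun a _ => by rw [cst_smul, key a]]
  unfold GPs G0s G1s
  rw [← Finset.sum_add_distrib, ← Finset.sum_add_distrib]
  refine Finset.sum_congr rfl fun a _ => ?_
  simp only [smul_add, Finset.smul_sum, smul_smul, sg_def]

end AddOperadWithMult


namespace AddOperadWithMult

variable {V : ℕ → Type} [∀ k, AddCommGroup (V k)] (P : AddOperadWithMult V)
variable {m n : ℕ} (x : V m) (y : V n)

theorem lemC :
    cst (show m + (n + 1) - 1 = m + n by omega) (P.toAddPlanarOperad.circ x (P.D y))
      = P.GPs x y (fun a b =>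
            (if a = b + 1 then sg ((n + 1 + 1) * b) else 0)
              + (if a = b then sg ((n + 1 + 1) * b) * sg (n + 1) else 0))
        + P.GQs x y (fun i k => sg ((n + 1 + 1) * i) * sg (k + 1)) := by
  have key : ∀ i, i < m →
      cst (show m + (n + 1) - 1 = m + n by omega) (P.ins x i (P.D y))
        = (∑ k ∈ Finset.range n, sg (k + 1) • P.QAt x y i k)
          + P.PAt x y (i + 1) i
          + sg (n + 1) • P.PAt x y i i := by
    intro i hi
    rw [show P.D y = ∑ j ∈ Finset.range (n + 2), ((-1 : ℤ) ^ j) • P.coface j y from rfl]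
    rw [Finset.sum_range_succ, Finset.sum_range_succ']
    rw [P.ins_add_right, P.ins_add_right, cst_add, cst_add]
    congr 1
    congr 1
    · rw [P.ins_sum_right, cst_sum]
      refine Finset.sum_congr rfl fun j hj => ?_
      simp only [Finset.mem_range] at hj
      rw [P.ins_zsmul_right, cst_smul,
        P.coface_mid (j + 1) (by omega) (by omega), QAt_eq]
      rfl
    · rw [P.coface_zero, pow_zero, one_smul,
        P.ins_cst_right _ (show m + (2 + n - 1) - 1 = m + (n + 1) - 1 by omega), cst_cst,
        PAt_eq, P.assoc_nested x P.mu y i 1 hi (by omega), cst_cst]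
    · rw [P.coface_top (n + 1) rfl, P.ins_zsmul_right, cst_smul,
        P.ins_cst_right _ (show m + (2 + n - 1) - 1 = m + (n + 1) - 1 by omega), cst_cst,
        PAt_eq]
      have h0 := P.assoc_nested x P.mu y i 0 hi (by omega)
      simp only [Nat.add_zero] at h0
      rw [h0, cst_cst]
      rfl
  rw [show P.toAddPlanarOperad.circ x (P.D y)
      = ∑ i ∈ Finset.range m, ((-1 : ℤ) ^ ((n + 1 + 1) * i)) • P.ins x i (P.D y) from rfl]
  rw [cst_sum, Finset.sum_congr rfl fun i hi => by
    rw [cst_smul, key i (Finset.mem_range.mp hi)]]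
  rw [← P.GPs_add x y, P.diag1_sum x y, P.diag0_sum x y]
  unfold GQs
  rw [add_right_comm, ← Finset.sum_add_distrib, ← Finset.sum_add_distrib]
  refine Finset.sum_congr rfl fun i _ => ?_
  simp only [smul_add, Finset.smul_sum, smul_smul, sg_def]
  abel

end AddOperadWithMult


namespace AddOperadWithMult

variable {V : ℕ → Type} [∀ k, AddCommGroup (V k)] (P : AddOperadWithMult V)
variable {m n : ℕ} (x : V m) (y : V n)

theorem R0At_eq (a : ℕ) :
    P.R0At x y a
      = cst (show 2 + m - 1 + n - 1 = m + n by omega) (P.ins (P.ins P.mu 1 x) a y) := by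
  unfold R0At
  rw [P.ins_cst_left _ (show 2 + m - 1 + n - 1 = m + 1 + n - 1 by omega), cst_cst]

theorem R1At_eq (a : ℕ) :
    P.R1At x y a
      = cst (show 2 + m - 1 + n - 1 = m + n by omega) (P.ins (P.ins P.mu 0 x) a y) := by
  unfold R1At
  rw [P.ins_cst_left _ (show 2 + m - 1 + n - 1 = m + 1 + n - 1 by omega), cst_cst]

theorem shift_G0 (g : ℕ → ℤ) :
    P.G0s x y (fun a => if 1 ≤ a then g (a - 1) else 0)
      = ∑ i ∈ Finset.range m, g i • P.R0At x y (i + 1) := by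
  unfold G0s
  rw [Finset.sum_range_succ']
  have h0 : (fun a => if 1 ≤ a then g (a - 1) else 0) 0 • P.R0At x y 0 = 0 := by simp
  rw [h0, add_zero]
  refine Finset.sum_congr rfl fun i _ => ?_
  simp

theorem top_G1 (g : ℕ → ℤ) :
    P.G1s x y (fun a => if a < m then g a else 0)
      = ∑ i ∈ Finset.range m, g i • P.R1At x y i := by
  unfold G1s
  rw [Finset.sum_range_succ]
  have h0 : (fun a => if a < m then g a else 0) m • P.R1At x y m = 0 := by simp
  rw [h0, add_zero]
  refine Finset.sum_congr rfl fun i hi => ?_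
  simp only [Finset.mem_range] at hi
  simp [hi]

theorem lemA (hmn : 1 ≤ m + n) :
    cst (show m + n - 1 + 1 = m + n by omega) (P.D (P.toAddPlanarOperad.circ x y))
      = P.GPs x y (fun a b => if b + 1 < a then sg (b + 1 + (n + 1) * (a - 1)) else 0)
        + P.GPs x y (fun a b => if a < b then sg (a + n + 1 + (b - (a + 1)) + (n + 1) * a) else 0)
        + P.GQs x y (fun i k => sg (i + 1 + k + (n + 1) * i))
        + P.G0s x y (fun a => if 1 ≤ a then sg ((n + 1) * (a - 1)) else 0)
        + P.G1s x y (fun a => if a < m then sg (m + n + (n + 1) * a) else 0) := by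
  have piece0 : cst (show m + n - 1 + 1 = m + n by omega)
      (((-1 : ℤ) ^ (0 : ℕ)) • P.coface 0 (P.toAddPlanarOperad.circ x y))
        = P.G0s x y (fun a => if 1 ≤ a then sg ((n + 1) * (a - 1)) else 0) := by
    rw [pow_zero, one_smul, P.coface_zero, cst_cst]
    rw [show P.toAddPlanarOperad.circ x y
        = ∑ i ∈ Finset.range m, ((-1 : ℤ) ^ ((n + 1) * i)) • P.ins x i y from rfl]
    rw [P.ins_sum_right, cst_sum, P.shift_G0 x y (fun i => sg ((n + 1) * i))]
    refine Finset.sum_congr rfl fun i hi => ?_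
    simp only [Finset.mem_range] at hi
    rw [P.ins_zsmul_right, cst_smul]
    congr 1
    rw [P.R0At_eq x y]
    have h := P.assoc_nested P.mu x y 1 i (by omega) hi
    rw [show 1 + i = i + 1 from by omega] at h
    rw [h, cst_cst]
  have pieceTop : cst (show m + n - 1 + 1 = m + n by omega)
      (((-1 : ℤ) ^ (m + n)) • P.coface (m + n) (P.toAddPlanarOperad.circ x y))
        = P.G1s x y (fun a => if a < m then sg (m + n + (n + 1) * a) else 0) := by
    rw [P.coface_top (m + n) (by omega), cst_smul, cst_cst]
    rw [show P.toAddPlanarOperad.circ x y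
        = ∑ i ∈ Finset.range m, ((-1 : ℤ) ^ ((n + 1) * i)) • P.ins x i y from rfl]
    rw [P.ins_sum_right, cst_sum, Finset.smul_sum,
      P.top_G1 x y (fun i => sg (m + n + (n + 1) * i))]
    refine Finset.sum_congr rfl fun i hi => ?_
    simp only [Finset.mem_range] at hi
    rw [P.ins_zsmul_right, cst_smul, smul_smul, sg_def, sg_def, sg_mul_sg]
    congr 1
    rw [P.R1At_eq x y]
    have h := P.assoc_nested P.mu x y 0 i (by omega) hi
    rw [Nat.zero_add] at h
    rw [h, cst_cst]
  have step : ∀ j ∈ Finset.Ico 1 (m + n),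
      cst (show m + n - 1 + 1 = m + n by omega)
          (((-1 : ℤ) ^ j) • P.coface j (P.toAddPlanarOperad.circ x y))
        = ∑ i ∈ Finset.range m, (sg j * sg ((n + 1) * i)) •
            cst (show m + n - 1 + 2 - 1 = m + n by omega)
              (P.ins (P.ins x i y) (j - 1) P.mu) := by
    intro j hj
    simp only [Finset.mem_Ico] at hj
    rw [P.coface_mid j (by omega) (by omega)]
    rw [show P.toAddPlanarOperad.circ x y
        = ∑ i ∈ Finset.range m, ((-1 : ℤ) ^ ((n + 1) * i)) • P.ins x i y from rfl]
    rw [P.ins_sum_left, cst_smul, cst_sum, Finset.smul_sum]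
    refine Finset.sum_congr rfl fun i _ => ?_
    rw [P.ins_zsmul_left, cst_smul, smul_smul, sg_def, sg_def]
  have splt : ∀ i ∈ Finset.range m,
      (∑ j ∈ Finset.Ico 1 (m + n), (sg j * sg ((n + 1) * i)) •
          cst (show m + n - 1 + 2 - 1 = m + n by omega)
            (P.ins (P.ins x i y) (j - 1) P.mu))
        = (∑ b ∈ Finset.range i, sg (b + 1 + (n + 1) * i) • P.PAt x y (i + 1) b)
          + ((∑ k ∈ Finset.range n, sg (i + 1 + k + (n + 1) * i) • P.QAt x y i k)
            + (∑ t ∈ Finset.range (m - (i + 1)),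
                sg (i + n + 1 + t + (n + 1) * i) • P.PAt x y i (i + 1 + t))) := by
    intro i hi
    simp only [Finset.mem_range] at hi
    rw [← Finset.sum_Ico_consecutive _ (show 1 ≤ i + 1 by omega) (show i + 1 ≤ m + n by omega)]
    rw [← Finset.sum_Ico_consecutive _ (show i + 1 ≤ i + n + 1 by omega)
      (show i + n + 1 ≤ m + n by omega)]
    congr 1
    · -- class 1 : j ∈ Ico 1 (i+1)
      rw [Finset.sum_Ico_eq_sum_range]
      refine Finset.sum_congr rfl fun b hb => ?_
      simp only [Finset.mem_range] at hb
      rw [show 1 + b - 1 = b from by omega]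
      have hterm : cst (show m + n - 1 + 2 - 1 = m + n by omega)
          (P.ins (P.ins x i y) b P.mu) = P.PAt x y (i + 1) b := by
        have hd := P.assoc_disjoint x y P.mu i b (by omega) hi
        rw [hd, cst_cst, P.PAt_eq x y]
        try rfl
      rw [hterm, sg_mul_sg, show 1 + b + (n + 1) * i = b + 1 + (n + 1) * i from by omega]
    · congr 1
      · -- class 2 : j ∈ Ico (i+1) (i+n+1)
        rw [Finset.sum_Ico_eq_sum_range]
        refine Finset.sum_congr (by rw [show i + n + 1 - (i + 1) = n from by omega])
          fun k hk => ?_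
        simp only [Finset.mem_range] at hk
        rw [show i + 1 + k - 1 = i + k from by omega]
        have hterm : cst (show m + n - 1 + 2 - 1 = m + n by omega)
            (P.ins (P.ins x i y) (i + k) P.mu) = P.QAt x y i k := by
          rw [P.assoc_nested x y P.mu i k hi hk, cst_cst, P.QAt_eq x y]
          try rfl
        rw [hterm, sg_mul_sg]
      · -- class 3 : j ∈ Ico (i+n+1) (m+n)
        rw [Finset.sum_Ico_eq_sum_range]
        refine Finset.sum_congr (by rw [show m + n - (i + n + 1) = m - (i + 1) from by omega])
          fun t ht => ?_
        simp only [Finset.mem_range] at ht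
        have hterm : cst (show m + n - 1 + 2 - 1 = m + n by omega)
            (P.ins (P.ins x i y) (i + n + 1 + t - 1) P.mu) = P.PAt x y i (i + 1 + t) := by
          rw [P.PAt_eq x y]
          have hd := P.assoc_disjoint x P.mu y (i + 1 + t) i (by omega) (by omega)
          rw [hd, cst_cst, show i + n + 1 + t - 1 = i + 1 + t + n - 1 from by omega]
          try rfl
        rw [hterm, sg_mul_sg]
  rw [show P.D (P.toAddPlanarOperad.circ x y)
      = ∑ j ∈ Finset.range (m + n - 1 + 2), ((-1 : ℤ) ^ j) •
          P.coface j (P.toAddPlanarOperad.circ x y) from rfl]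
  rw [show m + n - 1 + 2 = m + n + 1 from by omega]
  rw [Finset.sum_range_succ, Finset.range_eq_Ico,
    Finset.sum_eq_sum_Ico_succ_bot (show 0 < m + n from by omega)]
  rw [cst_add, cst_add, piece0, pieceTop]
  rw [cst_sum, Finset.sum_congr rfl step, Finset.sum_comm, Finset.sum_congr rfl splt]
  rw [Finset.sum_add_distrib, Finset.sum_add_distrib]
  rw [P.lower_sum x y (fun i b => sg (b + 1 + (n + 1) * i)),
    P.upper_sum x y (fun i t => sg (i + n + 1 + t + (n + 1) * i))]
  unfold GQs
  abel

end AddOperadWithMult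


namespace AddOperadWithMult

variable {V : ℕ → Type} [∀ k, AddCommGroup (V k)] (P : AddOperadWithMult V)
variable {m n : ℕ} (x : V m) (y : V n)

theorem omul_yx :
    cst (Nat.add_comm n m) (P.omul y x) = P.R0At x y 0 := by
  unfold omul R0At
  rw [cst_cst]

theorem omul_xy : P.omul x y = P.R1At x y m := by
  unfold omul R1At
  rw [P.ins_cst_left _ (show 2 + n - 1 + m - 1 = n + 1 + m - 1 by omega), cst_cst]
  have hd := P.assoc_disjoint P.mu y x 1 0 (by omega) (by omega)
  rw [hd, cst_cst, show 1 + m - 1 = m from by omega]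
  rw [P.ins_cst_left _ (show 2 + m - 1 + n - 1 = m + 1 + n - 1 by omega), cst_cst]

theorem GPs_congr (c c' : ℕ → ℕ → ℤ)
    (h : ∀ a, a ≤ m → ∀ b, b < m → c a b = c' a b) : P.GPs x y c = P.GPs x y c' := by
  refine Finset.sum_congr rfl fun a ha => Finset.sum_congr rfl fun b hb => ?_
  simp only [Finset.mem_range] at ha hb
  rw [h a (by omega) b hb]

theorem GQs_congr (c c' : ℕ → ℕ → ℤ)
    (h : ∀ i, i < m → ∀ k, k < n → c i k = c' i k) : P.GQs x y c = P.GQs x y c' := by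
  refine Finset.sum_congr rfl fun i hi => Finset.sum_congr rfl fun k hk => ?_
  simp only [Finset.mem_range] at hi hk
  rw [h i hi k hk]

theorem G0s_congr (c c' : ℕ → ℤ) (h : ∀ a, a ≤ m → c a = c' a) :
    P.G0s x y c = P.G0s x y c' := by
  refine Finset.sum_congr rfl fun a ha => ?_
  simp only [Finset.mem_range] at ha
  rw [h a (by omega)]

theorem G1s_congr (c c' : ℕ → ℤ) (h : ∀ a, a ≤ m → c a = c' a) :
    P.G1s x y c = P.G1s x y c' := by
  refine Finset.sum_congr rfl fun a ha => ?_
  simp only [Finset.mem_range] at ha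
  rw [h a (by omega)]

theorem coface_of_zero {k : ℕ} (j : ℕ) : P.coface j (0 : V k) = 0 := by
  unfold coface
  split_ifs
  · rw [show P.ins P.mu 1 (0 : V k) = 0 from map_zero (P.insR P.mu 1), cst_zero]
  · rw [show P.ins P.mu 0 (0 : V k) = 0 from map_zero (P.insR P.mu 0), cst_zero]
  · exact map_zero (P.insL (j - 1) P.mu)

theorem D_of_zero {k : ℕ} : P.D (0 : V k) = 0 := by
  unfold D
  refine Finset.sum_eq_zero fun j _ => ?_
  rw [P.coface_of_zero, smul_zero]

end AddOperadWithMult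


/-- Gerstenhaber's homotopy formula: for `x ∈ V(m)`, `y ∈ V(n)`:
`−d(x∘y) + (−1)^{n−1}(dx)∘y + x∘(dy) = (−1)^{n−1}(y·x − (−1)^{mn} x·y)`.
(The signs `(−1)^{n−1}` are written `(−1)^{n+1}`, which agrees with them also
for `n = 0`.) -/
theorem gerstenhaber_homotopy (V : ℕ → Type) [∀ n, AddCommGroup (V n)]
    (P : AddOperadWithMult V) (m n : ℕ) (x : V m) (y : V n) :
    -(tr (m + n - 1 + 1) (m + n) (P.D (P.toAddPlanarOperad.circ x y))) +
      ((-1 : ℤ) ^ (n + 1)) •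
        tr (m + 1 + n - 1) (m + n) (P.toAddPlanarOperad.circ (P.D x) y) +
      tr (m + (n + 1) - 1) (m + n) (P.toAddPlanarOperad.circ x (P.D y)) =
    ((-1 : ℤ) ^ (n + 1)) •
      (cst (by omega) (P.omul y x) - ((-1 : ℤ) ^ (m * n)) • P.omul x y) := by
  have lemA' : tr (m + n - 1 + 1) (m + n) (P.D (P.toAddPlanarOperad.circ x y))
      = P.GPs x y (fun a b => if b + 1 < a then sg (b + 1 + (n + 1) * (a - 1)) else 0)
        + P.GPs x y (fun a b => if a < b then sg (a + n + 1 + (b - (a + 1)) + (n + 1) * a) else 0)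
        + P.GQs x y (fun i k => sg (i + 1 + k + (n + 1) * i))
        + P.G0s x y (fun a => if 1 ≤ a then sg ((n + 1) * (a - 1)) else 0)
        + P.G1s x y (fun a => if a < m then sg (m + n + (n + 1) * a) else 0) := by
    rcases Nat.eq_zero_or_pos (m + n) with h0 | hpos
    · have hm : m = 0 := by omega
      have hn : n = 0 := by omega
      subst hm; subst hn
      rw [tr_ne (by omega)]
      simp [AddOperadWithMult.GPs, AddOperadWithMult.GQs,
        AddOperadWithMult.G0s, AddOperadWithMult.G1s]
    · rw [tr_eq_cst (by omega), P.lemA x y hpos]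
  rw [lemA', tr_eq_cst (show m + 1 + n - 1 = m + n by omega),
    tr_eq_cst (show m + (n + 1) - 1 = m + n by omega),
    P.lemB x y, P.lemC x y, P.omul_yx x y, P.omul_xy x y]
  simp only [sg_def]
  rw [smul_sub, smul_smul, sg_mul_sg,
    P.single_R0 x y (sg (n + 1)), P.single_R1 x y (sg (n + 1 + m * n)),
    smul_add, smul_add, P.GPs_smul x y, P.G0s_smul x y, P.G1s_smul x y]
  have hP : (P.GPs x y fun a b => sg (n + 1) * (sg ((n + 1) * a) * sg (b + 1)))
        + (P.GPs x y fun a b =>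
            (if a = b + 1 then sg ((n + 1 + 1) * b) else 0)
              + if a = b then sg ((n + 1 + 1) * b) * sg (n + 1) else 0)
      = (P.GPs x y fun a b => if b + 1 < a then sg (b + 1 + (n + 1) * (a - 1)) else 0)
        + P.GPs x y fun a b =>
            if a < b then sg (a + n + 1 + (b - (a + 1)) + (n + 1) * a) else 0 := by
    rw [P.GPs_add x y, P.GPs_add x y]
    refine P.GPs_congr x y _ _ fun a ha b hb => ?_
    simp only [sg_mul_sg]
    rcases Nat.lt_trichotomy a b with hc | hc | hc
    · rw [if_neg (by omega), if_neg (by omega), if_neg (by omega), if_pos hc]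
      simp only [add_zero, zero_add]
      refine sg_eq_sg ?_
      have hb1 : b - (a + 1) + (a + 1) = b := by omega
      zify
      ring_nf <;> omega
    · subst hc
      rw [if_neg (by omega), if_pos rfl, if_neg (by omega), if_neg (by omega)]
      simp only [zero_add, add_zero]
      refine sg_add_sg ?_
      ring_nf <;> omega
    · by_cases hab : a = b + 1
      · subst hab
        rw [if_pos rfl, if_neg (by omega), if_neg (by omega), if_neg (by omega)]
        simp only [add_zero, zero_add]
        refine sg_add_sg ?_
        ring_nf <;> omega
      · rw [if_neg hab, if_neg (by omega), if_pos (by omega), if_neg (by omega)]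
        simp only [add_zero, zero_add]
        obtain ⟨a', rfl⟩ : ∃ a', a = a' + 1 := ⟨a - 1, by omega⟩
        refine sg_eq_sg ?_
        simp only [Nat.add_sub_cancel]
        ring_nf <;> omega
  have hQ : (P.GQs x y fun i k => sg ((n + 1 + 1) * i) * sg (k + 1))
      = P.GQs x y fun i k => sg (i + 1 + k + (n + 1) * i) := by
    refine P.GQs_congr x y _ _ fun i hi k hk => ?_
    rw [sg_mul_sg]
    refine sg_eq_sg ?_
    ring_nf <;> omega
  have h0 : (P.G0s x y fun a => sg (n + 1) * sg ((n + 1) * a))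
      = (P.G0s x y fun a => if 1 ≤ a then sg ((n + 1) * (a - 1)) else 0)
        + P.G0s x y fun a => if a = 0 then sg (n + 1) else 0 := by
    rw [P.G0s_add x y]
    refine P.G0s_congr x y _ _ fun a ha => ?_
    rw [sg_mul_sg]
    rcases Nat.eq_zero_or_pos a with h | h
    · subst h
      rw [if_neg (by omega), if_pos rfl]
      simp only [zero_add]
      refine sg_eq_sg ?_
      ring_nf
    · rw [if_pos (by omega), if_neg (by omega)]
      simp only [add_zero]
      obtain ⟨a', rfl⟩ : ∃ a', a = a' + 1 := ⟨a - 1, by omega⟩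
      refine sg_eq_sg ?_
      simp only [Nat.add_sub_cancel]
      ring_nf <;> omega
  have h1 : (P.G1s x y fun a => sg (n + 1) * (sg ((n + 1) * a) * sg (m + 1)))
        + (P.G1s x y fun a => if a = m then sg (n + 1 + m * n) else 0)
      = P.G1s x y fun a => if a < m then sg (m + n + (n + 1) * a) else 0 := by
    rw [P.G1s_add x y]
    refine P.G1s_congr x y _ _ fun a ha => ?_
    simp only [sg_mul_sg]
    rcases Nat.lt_or_ge a m with h | h
    · rw [if_neg (by omega), if_pos h]
      simp only [add_zero]
      refine sg_eq_sg ?_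
      ring_nf <;> omega
    · have ham : a = m := by omega
      subst ham
      rw [if_pos rfl, if_neg (by omega)]
      refine sg_add_sg ?_
      ring_nf <;> omega
  have key : -(((((P.GPs x y fun a b => if b + 1 < a then sg (b + 1 + (n + 1) * (a - 1)) else 0) +
                  P.GPs x y fun a b => if a < b then sg (a + n + 1 + (b - (a + 1)) + (n + 1) * a) else 0) +
                P.GQs x y fun i k => sg (i + 1 + k + (n + 1) * i)) +
              P.G0s x y fun a => if 1 ≤ a then sg ((n + 1) * (a - 1)) else 0) +
            P.G1s x y fun a => if a < m then sg (m + n + (n + 1) * a) else 0) +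
        (((P.GPs x y fun a b => sg (n + 1) * (sg ((n + 1) * a) * sg (b + 1))) +
            P.G0s x y fun a => sg (n + 1) * sg ((n + 1) * a)) +
          P.G1s x y fun a => sg (n + 1) * (sg ((n + 1) * a) * sg (m + 1))) +
      ((P.GPs x y fun a b =>
          (if a = b + 1 then sg ((n + 1 + 1) * b) else 0) + if a = b then sg ((n + 1 + 1) * b) * sg (n + 1) else 0) +
        P.GQs x y fun i k => sg ((n + 1 + 1) * i) * sg (k + 1))
      = (((P.GPs x y fun a b => sg (n + 1) * (sg ((n + 1) * a) * sg (b + 1)))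
            + (P.GPs x y fun a b =>
                (if a = b + 1 then sg ((n + 1 + 1) * b) else 0)
                  + if a = b then sg ((n + 1 + 1) * b) * sg (n + 1) else 0))
          - ((P.GPs x y fun a b => if b + 1 < a then sg (b + 1 + (n + 1) * (a - 1)) else 0)
            + P.GPs x y fun a b =>
                if a < b then sg (a + n + 1 + (b - (a + 1)) + (n + 1) * a) else 0))
        + ((P.GQs x y fun i k => sg ((n + 1 + 1) * i) * sg (k + 1))
            - P.GQs x y fun i k => sg (i + 1 + k + (n + 1) * i))
        + ((P.G0s x y fun a => sg (n + 1) * sg ((n + 1) * a))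
            - ((P.G0s x y fun a => if 1 ≤ a then sg ((n + 1) * (a - 1)) else 0)
              + P.G0s x y fun a => if a = 0 then sg (n + 1) else 0))
        + (((P.G1s x y fun a => sg (n + 1) * (sg ((n + 1) * a) * sg (m + 1)))
              + (P.G1s x y fun a => if a = m then sg (n + 1 + m * n) else 0))
            - P.G1s x y fun a => if a < m then sg (m + n + (n + 1) * a) else 0)
        + ((P.G0s x y fun a => if a = 0 then sg (n + 1) else 0)
            - P.G1s x y fun a => if a = m then sg (n + 1 + m * n) else 0) := by
    abel
  rw [key, hP, hQ, h0, h1]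
  abel
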